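/- For a nonempty subset u ⊆ {1,…,d}, define the ANOVA component f̂_u(x) = Σ_{v ⊆ u} (−1)^{|u|−|v|} E(f̂ | x_l, l ∈ v), where E(f̂ | x_l, l ∈ v) is the integral of f̂ over the coordinates outside v. Then ∫_{[0,1]^d} f̂_u(x)² dx = Σ_{v, ṽ ⊆ u} Σ_{j=1}^n Σ_{i=1}^n (−1)^{2|u|−|v|−|ṽ|} β_j β_i e^{b_j + b_i} ( ∏_{l ∈ v ∩ ṽ} ε(w_{j,l} + w_{i,l}) ) ( ∏_{r ∉ v ∩ ṽ} ε(w_{j,r}) ε(w_{i,r}) ). -/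

import Mathlib

open MeasureTheory Real

/-- The function ε(t) = (e^t − 1)/t for t ≠ 0, and ε(0) = 1. -/
noncomputable def eps (t : ℝ) : ℝ := if t = 0 then 1 else (Real.exp t - 1) / t

/-- ELM surrogate with exponential activation:
`f̂(x) = Σ_{j=1}^n β_j exp(w_jᵀ x + b_j)`. -/
noncomputable def elm {d n : ℕ} (β b : Fin n → ℝ) (w : Fin n → Fin d → ℝ)
    (x : Fin d → ℝ) : ℝ :=
  ∑ j, β j * Real.exp ((∑ l, w j l * x l) + b j)


/-- Conditional expectation of `f` given the coordinates in `v`: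
the integral of `f` over the coordinates outside `v`, with the coordinates in `v`
fixed to those of `x`. -/
noncomputable def condExp {d : ℕ} (f : (Fin d → ℝ) → ℝ) (v : Finset (Fin d))
    (x : Fin d → ℝ) : ℝ :=
  ∫ y in Set.Icc (0 : Fin d → ℝ) 1, f (fun l => if l ∈ v then x l else y l)

/-- ANOVA component of `f` associated with the subset `u`:
`f_u(x) = Σ_{v ⊆ u} (−1)^{|u|−|v|} E(f | x_l, l ∈ v)`. -/
noncomputable def anova {d : ℕ} (f : (Fin d → ℝ) → ℝ) (u : Finset (Fin d))
    (x : Fin d → ℝ) : ℝ :=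
  ∑ v ∈ u.powerset, (-1 : ℝ) ^ (u.card - v.card) * condExp f v x

/-! `elm` is a combination of the exponentials `expLinear a x = exp (a ⬝ x)`. On the unit cube
such an exponential factorises over the coordinates, and `∫₀¹ e^{ct} dt = ε(c)`; integrating out
the coordinates outside `v` therefore gives `E(exp (a ⬝ ·) | x_v) = (∏_{l ∉ v} ε(a_l)) exp (a|_v ⬝ x)`.
The ANOVA component is thus a finite combination of exponentials of linear forms, and the product
of two of them, `exp ((a|_v + a'|_{v'}) ⬝ x)`, integrates to `∏_l ε(a_l 1_{l∈v} + a'_l 1_{l∈v'})`.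
Together with the remaining factors `ε(a_l)`, `ε(a'_l)` this is `ε(a_l + a'_l)` for `l ∈ v ∩ v'`
and `ε(a_l) ε(a'_l)` otherwise. -/

theorem eps_zero : eps 0 = 1 := if_pos rfl

theorem integral_exp_mul_Icc_zero_one (c : ℝ) : ∫ t in Set.Icc (0 : ℝ) 1, exp (c * t) = eps c := by
  rw [integral_Icc_eq_integral_Ioc, ← intervalIntegral.integral_of_le zero_le_one, eps]
  split_ifs with hc
  · simp [hc]
  · rw [intervalIntegral.integral_comp_mul_left (fun t => exp t) hc, integral_exp]
    simp [div_eq_inv_mul]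

theorem IsCompact.setIntegral_sq_sum {X κ : Type*} [TopologicalSpace X] [T2Space X]
    [MeasurableSpace X] [OpensMeasurableSpace X] {μ : Measure X} [IsFiniteMeasureOnCompacts μ]
    {K : Set X} (hK : IsCompact K) (s : Finset κ) {g : κ → X → ℝ}
    (hg : ∀ k ∈ s, Continuous (g k)) :
    ∫ x in K, (∑ k ∈ s, g k x) ^ 2 ∂μ = ∑ k ∈ s, ∑ k' ∈ s, ∫ x in K, g k x * g k' x ∂μ := by
  have hint : ∀ k ∈ s, ∀ k' ∈ s, IntegrableOn (fun x => g k x * g k' x) K μ := fun k hk k' hk' =>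
    ((hg k hk).mul (hg k' hk')).continuousOn.integrableOn_compact hK
  simp_rw [sq, Finset.sum_mul_sum]
  rw [integral_finsetSum _ fun k hk => integrable_finsetSum _ (hint k hk)]
  exact Finset.sum_congr rfl fun k hk => integral_finsetSum _ (hint k hk)

theorem pow_sub_mul_pow_sub {M : Type*} [Monoid M] (x : M) {m k k' : ℕ} (hk : k ≤ m)
    (hk' : k' ≤ m) : x ^ (m - k) * x ^ (m - k') = x ^ (2 * m - k - k') := by
  rw [← pow_add]; congr 1; omega

section ExpLinear

variable {ι : Type*} [Fintype ι]

noncomputable def expLinear (a x : ι → ℝ) : ℝ := exp (∑ i, a i * x i)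

@[fun_prop]
theorem continuous_expLinear (a : ι → ℝ) : Continuous (expLinear a) := by
  unfold expLinear; fun_prop

theorem expLinear_mul_expLinear (a a' x : ι → ℝ) :
    expLinear a x * expLinear a' x = expLinear (a + a') x := by
  simp only [expLinear, ← exp_add, ← Finset.sum_add_distrib, Pi.add_apply, add_mul]

theorem setIntegral_Icc_fintype_prod_eq_prod (a b : ι → ℝ) (f : ι → ℝ → ℝ) :
    ∫ x in Set.Icc a b, ∏ i, f i (x i) = ∏ i, ∫ t in Set.Icc (a i) (b i), f i t := by
  rw [← Set.pi_univ_Icc, volume_pi, Measure.restrict_pi_pi, integral_fintype_prod_eq_prod]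

theorem setIntegral_Icc_expLinear (a : ι → ℝ) :
    ∫ x in Set.Icc (0 : ι → ℝ) 1, expLinear a x = ∏ i, eps (a i) := by
  simp_rw [expLinear, exp_sum]
  exact (setIntegral_Icc_fintype_prod_eq_prod 0 1 fun i t => exp (a i * t)).trans
    (Finset.prod_congr rfl fun i _ => integral_exp_mul_Icc_zero_one (a i))

end ExpLinear

section CondExp

variable {d : ℕ}

theorem condExp_finsetSum_of_continuous {κ : Type*} (s : Finset κ) {f : κ → (Fin d → ℝ) → ℝ}
    (hf : ∀ k ∈ s, Continuous (f k)) (v : Finset (Fin d)) (x : Fin d → ℝ) :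
    condExp (fun y => ∑ k ∈ s, f k y) v x = ∑ k ∈ s, condExp (f k) v x :=
  integral_finsetSum s fun k hk =>
    ((hf k hk).comp (continuous_pi fun l => by split_ifs <;> fun_prop)).integrableOn_Icc

theorem condExp_const_mul (c : ℝ) (f : (Fin d → ℝ) → ℝ) (v : Finset (Fin d)) (x : Fin d → ℝ) :
    condExp (fun y => c * f y) v x = c * condExp f v x :=
  integral_const_mul c _

theorem condExp_expLinear (a : Fin d → ℝ) (v : Finset (Fin d)) (x : Fin d → ℝ) :
    condExp (expLinear a) v x
      = (∏ l ∈ vᶜ, eps (a l)) * expLinear (fun l => if l ∈ v then a l else 0) x := by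
  have hsplit : ∀ y : Fin d → ℝ, expLinear a (fun l => if l ∈ v then x l else y l)
      = expLinear (fun l => if l ∈ v then a l else 0) x
        * expLinear (fun l => if l ∈ v then 0 else a l) y := by
    intro y
    simp only [expLinear, ← exp_add, ← Finset.sum_add_distrib]
    exact congrArg exp <| Finset.sum_congr rfl fun l _ => by split_ifs <;> simp
  simp only [_root_.condExp, hsplit, integral_const_mul, setIntegral_Icc_expLinear]
  rw [mul_comm, ← Fintype.prod_ite_mem vᶜ]
  congr 1
  exact Finset.prod_congr rfl fun l _ => by by_cases hl : l ∈ v <;> simp [hl, eps_zero]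

@[fun_prop]
theorem continuous_condExp_expLinear (a : Fin d → ℝ) (v : Finset (Fin d)) :
    Continuous (condExp (expLinear a) v) := by
  simp_rw [funext (condExp_expLinear a v)]
  fun_prop

theorem setIntegral_condExp_expLinear_mul (a a' : Fin d → ℝ) (v v' : Finset (Fin d)) :
    ∫ x in Set.Icc (0 : Fin d → ℝ) 1, condExp (expLinear a) v x * condExp (expLinear a') v' x
      = (∏ l ∈ v ∩ v', eps (a l + a' l)) * ∏ l ∈ (v ∩ v')ᶜ, eps (a l) * eps (a' l) := by
  simp only [condExp_expLinear, mul_mul_mul_comm _ (expLinear _ _), expLinear_mul_expLinear,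
    integral_const_mul, setIntegral_Icc_expLinear]
  rw [← Fintype.prod_ite_mem vᶜ, ← Fintype.prod_ite_mem v'ᶜ, ← Fintype.prod_ite_mem (v ∩ v'),
    ← Fintype.prod_ite_mem (v ∩ v')ᶜ]
  simp only [← Finset.prod_mul_distrib]
  exact Finset.prod_congr rfl fun l _ => by
    by_cases hl : l ∈ v <;> by_cases hl' : l ∈ v' <;> simp [hl, hl', eps_zero, mul_comm]

end CondExp

theorem elm_eq_sum_expLinear {d n : ℕ} (β b : Fin n → ℝ) (w : Fin n → Fin d → ℝ) :
    elm β b w = fun x => ∑ j, β j * exp (b j) * expLinear (w j) x := by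
  funext x
  exact Finset.sum_congr rfl fun j _ => by rw [expLinear, exp_add]; ring

theorem anova_elm {d n : ℕ} (β b : Fin n → ℝ) (w : Fin n → Fin d → ℝ) (u : Finset (Fin d))
    (x : Fin d → ℝ) :
    anova (elm β b w) u x = ∑ p ∈ u.powerset ×ˢ Finset.univ,
      (-1 : ℝ) ^ (u.card - p.1.card) * (β p.2 * exp (b p.2)) * condExp (expLinear (w p.2)) p.1 x := by
  rw [anova, Finset.sum_product]
  refine Finset.sum_congr rfl fun v _ => ?_
  rw [elm_eq_sum_expLinear, condExp_finsetSum_of_continuous _ fun j _ => by fun_prop,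
    Finset.mul_sum]
  simp only [condExp_const_mul, mul_assoc]

theorem elm_anova_second_moment_general (d n : ℕ)
    (β b : Fin n → ℝ) (w : Fin n → Fin d → ℝ)
    (u : Finset (Fin d)) :
    ∫ x in Set.Icc (0 : Fin d → ℝ) 1, (anova (elm β b w) u x) ^ 2 =
      ∑ v ∈ u.powerset, ∑ v' ∈ u.powerset, ∑ j, ∑ i,
        (-1 : ℝ) ^ (2 * u.card - v.card - v'.card) *
          β j * β i * Real.exp (b j + b i) *
          (∏ l ∈ v ∩ v', eps (w j l + w i l)) *
          ∏ r ∈ (v ∩ v')ᶜ, eps (w j r) * eps (w i r) := by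
  simp only [anova_elm]
  rw [isCompact_Icc.setIntegral_sq_sum _ fun p _ => by fun_prop]
  simp only [Finset.sum_product]
  refine Finset.sum_congr rfl fun v hv => ?_
  rw [Finset.sum_comm]
  refine Finset.sum_congr rfl fun v' hv' => Finset.sum_congr rfl fun j _ =>
    Finset.sum_congr rfl fun i _ => ?_
  simp only [mul_mul_mul_comm _ (_root_.condExp _ _ _)]
  rw [integral_const_mul, setIntegral_condExp_expLinear_mul,
    ← pow_sub_mul_pow_sub (-1 : ℝ) (Finset.card_le_card (Finset.mem_powerset.mp hv))
      (Finset.card_le_card (Finset.mem_powerset.mp hv')), exp_add]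
  ring

/-- For a nonempty subset `u ⊆ {1,…,d}`, the second moment of the ANOVA component
`f̂_u` of the ELM surrogate satisfies
`∫_{[0,1]^d} f̂_u(x)² dx = Σ_{v,ṽ ⊆ u} Σ_j Σ_i (−1)^{2|u|−|v|−|ṽ|} β_j β_i e^{b_j+b_i}
  (∏_{l∈v∩ṽ} ε(w_{j,l}+w_{i,l})) (∏_{r∉v∩ṽ} ε(w_{j,r}) ε(w_{i,r}))`. -/
theorem elm_anova_second_moment (d n : ℕ) (hd : 0 < d) (hn : 0 < n)
    (β b : Fin n → ℝ) (w : Fin n → Fin d → ℝ)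
    (u : Finset (Fin d)) (hu : u.Nonempty) :
    ∫ x in Set.Icc (0 : Fin d → ℝ) 1, (anova (elm β b w) u x) ^ 2 =
      ∑ v ∈ u.powerset, ∑ v' ∈ u.powerset, ∑ j, ∑ i,
        (-1 : ℝ) ^ (2 * u.card - v.card - v'.card) *
          β j * β i * Real.exp (b j + b i) *
          (∏ l ∈ v ∩ v', eps (w j l + w i l)) *
          ∏ r ∈ (v ∩ v')ᶜ, eps (w j r) * eps (w i r) :=
  elm_anova_second_moment_general d n β b w u
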